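/- Let q be a positive real number with q ≠ 1, let c ≥ 1 be an integer and let l ≥ 2 be an integer. Then Σ_{ν ⊢ l} ((−1)^{ℓ(ν)}/z_ν) · Σ_{d} c·d·(1−q^{c−1})(1−q^{d−1})/(1−q^{c+d−1}) = c·( (1−q^{c−1})(1−q^{l−2})/(1−q^{c+l−2}) − (1−q^{c−1})(1−q^{l−1})/(1−q^{c+l−1}) ), where the outer sum runs over all integer partitions ν of l and the inner sum runs over the parts d of ν counted with multiplicity. -/

import Mathlib

/-!
Put `S n = ∑_{μ ⊢ n} (-1)^{ℓ(μ)} / z_μ`. Adding a part `d` to `μ ⊢ n - d` multiplies `z_μ` by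
`d · m_d(ν)` for the resulting `ν ⊢ n`, so `∑_{ν ⊢ n} (-1)^{ℓ(ν)} m_d(ν) / z_ν = -S (n - d) / d`
and, for any weight `h`,
`∑_{ν ⊢ n} (-1)^{ℓ(ν)} / z_ν · ∑_{d ∈ ν} h d = -∑_{d = 1}^{n} h d · S (n - d) / d`.
The weight `h d = d` gives `n · S n = -∑_{j < n} S j`; with `S 0 = 1` and `S 1 = -1` this forces
`S n = 0` for `n ≥ 2` (indeed `∑ S n tⁿ = exp (-∑ tᵏ / k) = 1 - t`). Only `d = n - 1` and `d = n`
survive, leaving `h (n - 1) / (n - 1) - h n / n`.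
-/

open Finset

/-- `z_ν = ∏_j j^{m_j(ν)} · m_j(ν)!` where `m_j(ν)` is the number of parts of `ν`
equal to `j`. -/
def zPartition {n : ℕ} (P : Nat.Partition n) : ℕ :=
  ∏ j ∈ P.parts.toFinset, j ^ (P.parts.count j) * (P.parts.count j).factorial

def zMultiset (s : Multiset ℕ) : ℕ :=
  ∏ j ∈ s.toFinset, j ^ s.count j * (s.count j).factorial

theorem zPartition_eq_zMultiset {n : ℕ} (ν : Nat.Partition n) :
    zPartition ν = zMultiset ν.parts :=
  rfl

theorem zMultiset_eq_prod_of_subset {s : Multiset ℕ} {T : Finset ℕ} (hT : s.toFinset ⊆ T) :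
    zMultiset s = ∏ j ∈ T, j ^ s.count j * (s.count j).factorial :=
  prod_subset hT fun j _ hj => by simp [Multiset.count_eq_zero.2 (by simpa using hj)]

theorem zMultiset_cons (d : ℕ) (s : Multiset ℕ) :
    zMultiset (d ::ₘ s) = d * (s.count d + 1) * zMultiset s := by
  have hd : d ∈ insert d s.toFinset := mem_insert_self _ _
  rw [zMultiset, Multiset.toFinset_cons, zMultiset_eq_prod_of_subset (subset_insert d _),
    ← mul_prod_erase _ _ hd, ← mul_prod_erase _ _ hd,
    prod_congr rfl fun j hj => by rw [Multiset.count_cons_of_ne (ne_of_mem_erase hj)],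
    Multiset.count_cons_self, Nat.factorial_succ, pow_succ]
  ring

theorem zMultiset_ne_zero {s : Multiset ℕ} (hs : 0 ∉ s) : zMultiset s ≠ 0 :=
  prod_ne_zero_iff.2 fun j hj =>
    have : j ≠ 0 := fun h => hs (h ▸ Multiset.mem_toFinset.1 hj)
    by positivity

theorem Nat.Partition.zMultiset_parts_ne_zero {n : ℕ} (ν : Nat.Partition n) :
    zMultiset ν.parts ≠ 0 :=
  zMultiset_ne_zero fun h => (ν.parts_pos h).false

theorem Nat.Partition.sum_eq_sum_cons {M : Type*} [AddCommMonoid M] {n d : ℕ} (hd : 1 ≤ d)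
    (hdn : d ≤ n) (f : Multiset ℕ → M) (hf : ∀ s, d ∉ s → f s = 0) :
    ∑ ν : Nat.Partition n, f ν.parts = ∑ μ : Nat.Partition (n - d), f (d ::ₘ μ.parts) := by
  rw [← sum_filter_of_ne fun ν _ hν => by_contra fun h => hν (hf _ h),
    sum_subtype (p := fun ν => d ∈ ν.parts) _ fun ν => by simp]
  exact ((partitionWithPartEquiv hd hdn).symm.sum_comp fun p => f p.1.parts).symm

section SignedZSum

variable (K : Type*) [Field K]

noncomputable def signedZSum (n : ℕ) : K :=
  ∑ μ : Nat.Partition n, (-1 : K) ^ Multiset.card μ.parts / zMultiset μ.parts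

theorem signedZSum_zero : signedZSum K 0 = 1 := by
  simp [signedZSum, zMultiset]

theorem signedZSum_one : signedZSum K 1 = -1 := by
  simp [signedZSum, Nat.Partition.partition_one_parts, zMultiset]

variable {K} [CharZero K]

theorem sum_signedZ_mul_count {n d : ℕ} (hd : 1 ≤ d) (hdn : d ≤ n) :
    ∑ ν : Nat.Partition n,
        (-1 : K) ^ Multiset.card ν.parts * ν.parts.count d / zMultiset ν.parts
      = -signedZSum K (n - d) / d := by
  rw [Nat.Partition.sum_eq_sum_cons hd hdn
      (fun s => (-1 : K) ^ Multiset.card s * s.count d / zMultiset s)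
      fun s hs => by simp [Multiset.count_eq_zero.2 hs],
    signedZSum, neg_div, sum_div, ← sum_neg_distrib]
  refine sum_congr rfl fun μ _ => ?_
  have hz : (zMultiset μ.parts : K) ≠ 0 := Nat.cast_ne_zero.2 μ.zMultiset_parts_ne_zero
  have hd' : (d : K) ≠ 0 := Nat.cast_ne_zero.2 (by omega)
  rw [zMultiset_cons, Multiset.count_cons_self, Multiset.card_cons, pow_succ]
  push_cast
  field_simp

theorem Nat.Partition.sum_map_eq_sum_count {M : Type*} [AddCommMonoid M] {n : ℕ}
    (ν : Nat.Partition n) (h : ℕ → M) :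
    (ν.parts.map h).sum = ∑ d ∈ Icc 1 n, ν.parts.count d • h d := by
  rw [sum_multiset_map_count]
  refine sum_subset (fun d hd => ?_) fun d _ hd => ?_
  · have hd := Multiset.mem_toFinset.1 hd
    exact mem_Icc.2 ⟨ν.parts_pos hd, ν.le_of_mem_parts hd⟩
  · rw [Multiset.count_eq_zero.2 (mt Multiset.mem_toFinset.2 hd), zero_smul]

theorem sum_signedZ_mul_sum_map {n : ℕ} (h : ℕ → K) :
    ∑ ν : Nat.Partition n,
        (-1 : K) ^ Multiset.card ν.parts / zMultiset ν.parts * (ν.parts.map h).sum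
      = ∑ d ∈ Icc 1 n, h d * (-signedZSum K (n - d) / d) := by
  simp_rw [Nat.Partition.sum_map_eq_sum_count, mul_sum, nsmul_eq_mul]
  rw [sum_comm]
  refine sum_congr rfl fun d hd => ?_
  obtain ⟨hd1, hdn⟩ := mem_Icc.1 hd
  rw [← sum_signedZ_mul_count hd1 hdn, mul_sum]
  exact sum_congr rfl fun ν _ => by ring

theorem natCast_mul_signedZSum (n : ℕ) :
    (n : K) * signedZSum K n = -∑ j ∈ range n, signedZSum K j := by
  have hsum (ν : Nat.Partition n) : (ν.parts.map ((↑) : ℕ → K)).sum = n := by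
    rw [← Nat.cast_multiset_sum, ν.parts_sum]
  have hterm (d) (hd : d ∈ Icc 1 n) :
      (d : K) * (-signedZSum K (n - d) / d) = -signedZSum K (n - d) :=
    mul_div_cancel₀ _ (Nat.cast_ne_zero.2 (by rw [mem_Icc] at hd; omega))
  calc (n : K) * signedZSum K n
      = ∑ ν : Nat.Partition n, (-1 : K) ^ Multiset.card ν.parts / zMultiset ν.parts *
          (ν.parts.map ((↑) : ℕ → K)).sum := by
        simp_rw [hsum, signedZSum, mul_sum, mul_comm (n : K)]
    _ = -∑ d ∈ Icc 1 n, signedZSum K (n - d) := by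
        rw [sum_signedZ_mul_sum_map, sum_congr rfl hterm, sum_neg_distrib]
    _ = -∑ j ∈ range n, signedZSum K j := by
        rw [← Ico_add_one_right_eq_Icc, sum_Ico_reflect _ _ le_rfl, Nat.add_sub_cancel,
          Nat.sub_self, range_eq_Ico]

theorem sum_range_signedZSum {n : ℕ} (hn : 2 ≤ n) : ∑ j ∈ range n, signedZSum K j = 0 := by
  induction n, hn using Nat.le_induction with
  | base => simp [sum_range_succ, signedZSum_zero, signedZSum_one]
  | succ m hm ih =>
    have h := natCast_mul_signedZSum (K := K) m
    rw [ih, neg_zero] at h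
    rw [sum_range_succ, ih, zero_add,
      (mul_eq_zero.1 h).resolve_left (Nat.cast_ne_zero.2 (by omega))]

theorem signedZSum_eq_zero {n : ℕ} (hn : 2 ≤ n) : signedZSum K n = 0 := by
  simpa [sum_range_succ, sum_range_signedZSum hn] using
    sum_range_signedZSum (K := K) (n := n + 1) (by omega)

theorem sum_signedZ_mul_sum_map_of_two_le {n : ℕ} (hn : 2 ≤ n) (h : ℕ → K) :
    ∑ ν : Nat.Partition n,
        (-1 : K) ^ Multiset.card ν.parts / zMultiset ν.parts * (ν.parts.map h).sum
      = h (n - 1) / (n - 1 : ℕ) - h n / n := by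
  have hsub : {n - 1, n} ⊆ Icc 1 n := by
    simp only [insert_subset_iff, singleton_subset_iff, mem_Icc]
    omega
  rw [sum_signedZ_mul_sum_map, ← sum_subset hsub fun d hd hd' => ?_,
    sum_pair (by omega), Nat.sub_sub_self (by omega), Nat.sub_self, signedZSum_one, signedZSum_zero]
  · ring
  · simp only [mem_insert, mem_singleton, not_or] at hd'
    rw [signedZSum_eq_zero (by have := mem_Icc.1 hd; omega), neg_zero, zero_div, mul_zero]

end SignedZSum

theorem partition_sum_simplification_general
    (q : ℝ) (c : ℕ) (l : ℕ) (hl : 2 ≤ l) :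
    ∑ ν : Nat.Partition l,
        ((-1 : ℝ) ^ (Multiset.card ν.parts) / (zPartition ν : ℝ)) *
          (ν.parts.map (fun d =>
            (c : ℝ) * (d : ℝ) * (1 - q ^ (c - 1)) * (1 - q ^ (d - 1)) / (1 - q ^ (c + d - 1)))).sum
      = (c : ℝ) *
          ((1 - q ^ (c - 1)) * (1 - q ^ (l - 2)) / (1 - q ^ (c + l - 2))
            - (1 - q ^ (c - 1)) * (1 - q ^ (l - 1)) / (1 - q ^ (c + l - 1))) := by
  -- The parts are coerced to `ℝ` before `d` is bound, so `q ^ (d - 1)` is `Real.rpow`.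
  have hpow (m : ℕ) (hm : 1 ≤ m) : q ^ ((m : ℝ) - 1) = q ^ (m - 1) := by
    rw [← Real.rpow_natCast, Nat.cast_sub hm, Nat.cast_one]
  have hl1 : ((l - 1 : ℕ) : ℝ) ≠ 0 := Nat.cast_ne_zero.2 (by omega)
  have hl0 : (l : ℝ) ≠ 0 := Nat.cast_ne_zero.2 (by omega)
  simp only [zPartition_eq_zMultiset, Multiset.pure_def, Multiset.bind_def,
    Multiset.bind_singleton, Multiset.map_map, Function.comp_def]
  rw [sum_signedZ_mul_sum_map_of_two_le hl, ← Nat.cast_add, ← Nat.cast_add, hpow _ (by omega),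
    hpow _ (by omega), hpow _ (by omega), hpow _ (by omega), show l - 1 - 1 = l - 2 by omega,
    show c + (l - 1) - 1 = c + l - 2 by omega]
  field_simp

theorem partition_sum_simplification
    (q : ℝ) (hq0 : 0 < q) (hq1 : q ≠ 1) (c : ℕ) (hc : 1 ≤ c) (l : ℕ) (hl : 2 ≤ l) :
    ∑ ν : Nat.Partition l,
        ((-1 : ℝ) ^ (Multiset.card ν.parts) / (zPartition ν : ℝ)) *
          (ν.parts.map (fun d =>
            (c : ℝ) * (d : ℝ) * (1 - q ^ (c - 1)) * (1 - q ^ (d - 1)) / (1 - q ^ (c + d - 1)))).sum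
      = (c : ℝ) *
          ((1 - q ^ (c - 1)) * (1 - q ^ (l - 2)) / (1 - q ^ (c + l - 2))
            - (1 - q ^ (c - 1)) * (1 - q ^ (l - 1)) / (1 - q ^ (c + l - 1))) :=
  partition_sum_simplification_general q c l hl
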